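/- Composition of projections approximates intersection projection: if X is a d-partite (q,γ)-product, then for any f : X(d) → ℝ and any T, T' ⊆ [d], ‖E_T E_{T'} f − E_{T∩T'} f‖_q ≤ γ |T||T'| ‖f‖_q. -/

import Mathlib

open Finset BigOperators

/-- Conditional expectation operator `E_T` on a `d`-partite space:
`E_T f (x) = E[f(y) | y_T = x_T]` under the (finitely supported) measure `μ`. -/
noncomputable def projE {d : ℕ} {Ω : Type} [Fintype Ω] [DecidableEq Ω]
    (μ : (Fin d → Ω) → ℝ) (T : Finset (Fin d))
    (f : (Fin d → Ω) → ℝ) (x : Fin d → Ω) : ℝ :=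
  (∑ y : Fin d → Ω, if ∀ i ∈ T, y i = x i then μ y * f y else 0) /
  (∑ y : Fin d → Ω, if ∀ i ∈ T, y i = x i then μ y else 0)

/-- Efron–Stein component `f^{=S} = ∑_{T ⊆ S} (-1)^{|S|-|T|} E_T f`. -/
noncomputable def esComp {d : ℕ} {Ω : Type} [Fintype Ω] [DecidableEq Ω]
    (μ : (Fin d → Ω) → ℝ) (S : Finset (Fin d))
    (f : (Fin d → Ω) → ℝ) : (Fin d → Ω) → ℝ :=
  fun x => ∑ T ∈ S.powerset, (-1 : ℝ) ^ (S.card - T.card) * projE μ T f x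

/-- `L^q` norm with respect to the probability mass function `μ`. -/
noncomputable def pnorm {α : Type} [Fintype α] (μ : α → ℝ) (q : ℝ) (f : α → ℝ) : ℝ :=
  (∑ x, μ x * |f x| ^ q) ^ (1 / q)

/-- Conditional (link) measure obtained from `μ` by conditioning the coordinates
in `R` to agree with `z`. -/
noncomputable def condMeasure {d : ℕ} {Ω : Type} [Fintype Ω] [DecidableEq Ω]
    (μ : (Fin d → Ω) → ℝ) (R : Finset (Fin d)) (z : Fin d → Ω) :
    (Fin d → Ω) → ℝ :=
  fun y => (if ∀ i ∈ R, y i = z i then μ y else 0) /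
    (∑ y' : Fin d → Ω, if ∀ i ∈ R, y' i = z i then μ y' else 0)

/-- Expectation with respect to the mass function `μ`. -/
noncomputable def expect {α : Type} [Fintype α] (μ : α → ℝ) (f : α → ℝ) : ℝ :=
  ∑ x, μ x * f x

/-- `X` is a `(q,γ)`-product: in every link of codimension at least `2`
(conditioning the coordinates in `R` on `z`), for every pair of distinct colors
`i, j ∉ R`, the bipartite walk from color `i` to color `j` is a `q`-norm
expander: `‖A^τ_{i,j} g − Π^τ_{i,j} g‖_q ≤ γ ‖g‖_q` for every function `g` of
the `i`-th coordinate. -/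
def IsQGammaProduct {d : ℕ} {Ω : Type} [Fintype Ω] [DecidableEq Ω]
    (μ : (Fin d → Ω) → ℝ) (q γ : ℝ) : Prop :=
  ∀ (R : Finset (Fin d)) (z : Fin d → Ω), R.card + 2 ≤ d →
    ∀ i j : Fin d, i ∉ R → j ∉ R → i ≠ j →
      ∀ g : (Fin d → Ω) → ℝ, (∀ x y, x i = y i → g x = g y) →
        pnorm (condMeasure μ R z) q
            (fun x => projE (condMeasure μ R z) {j} g x - expect (condMeasure μ R z) g)
          ≤ γ * pnorm (condMeasure μ R z) q g

/-!
Put `g = E_{T'} f`, a `T'`-junta. By the tower property `E_{T∩T'} f = E_{T∩T'} g`, and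
`E_T g - E_{T∩T'} g` telescopes over the colors `i ∈ T \ T'`, added one at a time to a set
`R ⊇ T ∩ T'`. Each increment `E_{R+i} g - E_R g` is at most `γ |T'| ‖g‖_q`: peeling the colors
`j ∈ T'` off `g` one at a time, each peeled piece is, in a link, a function of color `j` alone, on
which adding `i` to the conditioning set acts as the walk from color `j` to color `i` minus its
stationary part. Links are glued back by averaging `q`-th moments, and conditional expectations
are `L^q` contractions by Jensen's inequality.
-/

section Moment

variable {α : Type} [Fintype α] {ν : α → ℝ} {q : ℝ}

noncomputable def absMoment (ν : α → ℝ) (q : ℝ) (f : α → ℝ) : ℝ :=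
  ∑ x, ν x * |f x| ^ q

lemma absMoment_nonneg (hν : ∀ x, 0 ≤ ν x) (f : α → ℝ) : 0 ≤ absMoment ν q f :=
  sum_nonneg fun x _ => mul_nonneg (hν x) (Real.rpow_nonneg (abs_nonneg _) q)

lemma pnorm_nonneg (hν : ∀ x, 0 ≤ ν x) (f : α → ℝ) : 0 ≤ pnorm ν q f :=
  Real.rpow_nonneg (absMoment_nonneg hν f) _

lemma pnorm_le_mul_pnorm_iff (hν : ∀ x, 0 ≤ ν x) (hq : 0 < q) {K : ℝ} (hK : 0 ≤ K)
    (F G : α → ℝ) :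
    pnorm ν q F ≤ K * pnorm ν q G ↔ absMoment ν q F ≤ K ^ q * absMoment ν q G := by
  have hKG : K * pnorm ν q G = (K ^ q * absMoment ν q G) ^ (1 / q) := by
    rw [Real.mul_rpow (Real.rpow_nonneg hK q) (absMoment_nonneg hν G), ← Real.rpow_mul hK,
      mul_one_div_cancel hq.ne', Real.rpow_one, pnorm, absMoment]
  rw [hKG, pnorm, ← absMoment, Real.rpow_le_rpow_iff (absMoment_nonneg hν F)
    (mul_nonneg (Real.rpow_nonneg hK q) (absMoment_nonneg hν G)) (one_div_pos.2 hq)]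

lemma pnorm_congr_of_ne_zero {F G : α → ℝ} (h : ∀ x, ν x ≠ 0 → F x = G x) :
    pnorm ν q F = pnorm ν q G := by
  unfold pnorm
  congr 1
  refine sum_congr rfl fun x _ => ?_
  rcases eq_or_ne (ν x) 0 with h0 | h0
  · simp [h0]
  · rw [h x h0]

lemma pnorm_eq_zero_of_ne_zero (hq : q ≠ 0) {F : α → ℝ} (h : ∀ x, ν x ≠ 0 → F x = 0) :
    pnorm ν q F = 0 := by
  rw [pnorm_congr_of_ne_zero h, pnorm]
  simp [Real.zero_rpow hq, Real.zero_rpow (inv_ne_zero hq)]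

-- Minkowski's inequality, after absorbing the weights into the functions.
lemma pnorm_add_le (hν : ∀ x, 0 ≤ ν x) (hq : 1 ≤ q) (F G : α → ℝ) :
    pnorm ν q (fun x => F x + G x) ≤ pnorm ν q F + pnorm ν q G := by
  have hq0 : q ≠ 0 := by positivity
  have weigh : ∀ H : α → ℝ, ∑ x, ν x * |H x| ^ q = ∑ x, |ν x ^ (1 / q) * H x| ^ q := by
    intro H
    refine sum_congr rfl fun x _ => ?_
    rw [abs_mul, abs_of_nonneg (Real.rpow_nonneg (hν x) _),
      Real.mul_rpow (Real.rpow_nonneg (hν x) _) (abs_nonneg _),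
      ← Real.rpow_mul (hν x), one_div_mul_cancel hq0, Real.rpow_one]
  simp only [pnorm, weigh, mul_add]
  exact Real.Lp_add_le univ _ _ hq

lemma abs_expect_rpow_le (hν : ∀ x, 0 ≤ ν x) (hν1 : ∑ x, ν x = 1) (hq : 1 ≤ q) (f : α → ℝ) :
    |expect ν f| ^ q ≤ expect ν (fun x => |f x| ^ q) := by
  have habs : |expect ν f| ≤ ∑ x, ν x * |f x| := by
    refine (abs_sum_le_sum_abs _ _).trans_eq (sum_congr rfl fun x _ => ?_)
    rw [abs_mul, abs_of_nonneg (hν x)]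
  exact (Real.rpow_le_rpow (abs_nonneg _) habs (by positivity)).trans
    (Real.rpow_arith_mean_le_arith_mean_rpow univ ν (fun x => |f x|)
      (fun x _ => hν x) hν1 (fun x _ => abs_nonneg _) hq)

end Moment

def Junta {d : ℕ} {Ω : Type} (T : Finset (Fin d)) (g : (Fin d → Ω) → ℝ) : Prop :=
  ∀ x y : Fin d → Ω, (∀ i ∈ T, x i = y i) → g x = g y

lemma Junta.mono {d : ℕ} {Ω : Type} {T T' : Finset (Fin d)} {g : (Fin d → Ω) → ℝ}
    (hg : Junta T g) (hTT' : T ⊆ T') : Junta T' g :=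
  fun x y hxy => hg x y fun i hi => hxy i (hTT' hi)

section ConditionalExpectation

variable {d : ℕ} {Ω : Type} [Fintype Ω] [DecidableEq Ω] {ν : (Fin d → Ω) → ℝ}

noncomputable def cylSum (ν : (Fin d → Ω) → ℝ) (T : Finset (Fin d)) (x : Fin d → Ω)
    (h : (Fin d → Ω) → ℝ) : ℝ :=
  ∑ y, if ∀ i ∈ T, y i = x i then ν y * h y else 0

lemma projE_eq_cylSum_div (ν : (Fin d → Ω) → ℝ) (T : Finset (Fin d)) (f : (Fin d → Ω) → ℝ)
    (x : Fin d → Ω) : projE ν T f x = cylSum ν T x f / cylSum ν T x 1 := by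
  simp [projE, cylSum]

lemma cylSum_congr {T : Finset (Fin d)} {x x' : Fin d → Ω} (hx : ∀ i ∈ T, x i = x' i)
    (h : (Fin d → Ω) → ℝ) : cylSum ν T x h = cylSum ν T x' h := by
  unfold cylSum
  refine sum_congr rfl fun y _ => if_congr ?_ rfl rfl
  exact forall₂_congr fun i hi => by rw [hx i hi]

lemma le_cylSum_one (hν : ∀ y, 0 ≤ ν y) (T : Finset (Fin d)) (x : Fin d → Ω) :
    ν x ≤ cylSum ν T x 1 := by
  have := single_le_sum (f := fun y => if ∀ i ∈ T, y i = x i then ν y * 1 else 0)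
    (fun y _ => by split_ifs <;> simp [hν y]) (mem_univ x)
  simpa [cylSum] using this

lemma cylSum_one_ne_zero (hν : ∀ y, 0 ≤ ν y) (T : Finset (Fin d)) {x : Fin d → Ω}
    (hx : ν x ≠ 0) : cylSum ν T x 1 ≠ 0 :=
  ((lt_of_le_of_ne (hν x) hx.symm).trans_le (le_cylSum_one hν T x)).ne'

-- A `ν`-null cylinder (where `0 / 0 = 0`) forces `ν x = 0`.
lemma mul_cylSum_one_div_self (hν : ∀ y, 0 ≤ ν y) (T : Finset (Fin d)) (x : Fin d → Ω) :
    ν x * (cylSum ν T x 1 / cylSum ν T x 1) = ν x := by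
  rcases eq_or_ne (ν x) 0 with h0 | h0
  · rw [h0, zero_mul]
  · rw [div_self (cylSum_one_ne_zero hν T h0), mul_one]

lemma projE_junta (ν : (Fin d → Ω) → ℝ) (T : Finset (Fin d)) (f : (Fin d → Ω) → ℝ) :
    Junta T (projE ν T f) := fun _ _ hxy => by
  rw [projE_eq_cylSum_div, projE_eq_cylSum_div, cylSum_congr hxy, cylSum_congr hxy]

lemma projE_sub (ν : (Fin d → Ω) → ℝ) (T : Finset (Fin d)) (f g : (Fin d → Ω) → ℝ)
    (x : Fin d → Ω) :
    projE ν T (fun y => f y - g y) x = projE ν T f x - projE ν T g x := by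
  simp only [projE_eq_cylSum_div, cylSum, ← sub_div, ← sum_sub_distrib]
  congr 1
  refine sum_congr rfl fun y _ => ?_
  split_ifs <;> ring

lemma projE_congr_of_ne_zero {f g : (Fin d → Ω) → ℝ} (h : ∀ y, ν y ≠ 0 → f y = g y)
    (T : Finset (Fin d)) (x : Fin d → Ω) : projE ν T f x = projE ν T g x := by
  simp only [projE_eq_cylSum_div, cylSum]
  congr 1
  refine sum_congr rfl fun y _ => ?_
  rcases eq_or_ne (ν y) 0 with h0 | h0
  · simp [h0]
  · rw [h y h0]

lemma projE_of_junta (hν : ∀ y, 0 ≤ ν y) {T C : Finset (Fin d)} (hTC : T ⊆ C)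
    {g : (Fin d → Ω) → ℝ} (hg : Junta T g) {x : Fin d → Ω} (hx : ν x ≠ 0) :
    projE ν C g x = g x := by
  have hsum : cylSum ν C x g = g x * cylSum ν C x 1 := by
    simp only [cylSum, mul_sum, Pi.one_apply, mul_one]
    refine sum_congr rfl fun y _ => ?_
    split_ifs with hy
    · rw [hg y x fun i hi => hy i (hTC hi)]
      ring
    · simp
  rw [projE_eq_cylSum_div, hsum, mul_div_assoc, div_self (cylSum_one_ne_zero hν C hx), mul_one]

lemma projE_empty (hν1 : ∑ y, ν y = 1) (f : (Fin d → Ω) → ℝ) (x : Fin d → Ω) :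
    projE ν ∅ f x = expect ν f := by
  simp [projE, hν1, _root_.expect]

lemma sum_mul_projE_of_junta (hν : ∀ y, 0 ≤ ν y) (B : Finset (Fin d))
    {ε : (Fin d → Ω) → ℝ} (hε : Junta B ε) (f : (Fin d → Ω) → ℝ) :
    ∑ y, ε y * ν y * projE ν B f y = ∑ y, ε y * ν y * f y := by
  calc ∑ y, ε y * ν y * projE ν B f y
      = ∑ y, ∑ z, if ∀ i ∈ B, z i = y i then
          ε y * ν y / cylSum ν B y 1 * (ν z * f z) else 0 := by
        refine sum_congr rfl fun y _ => ?_
        rw [projE_eq_cylSum_div, cylSum, ← mul_div_assoc, mul_div_right_comm, mul_sum]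
        refine sum_congr rfl fun z _ => ?_
        split_ifs <;> simp
    _ = ∑ z, ∑ y, if ∀ i ∈ B, y i = z i then
          ε z * ν z * f z * (ν y * 1 / cylSum ν B z 1) else 0 := by
        rw [sum_comm]
        refine sum_congr rfl fun z _ => sum_congr rfl fun y _ => ?_
        by_cases hy : ∀ i ∈ B, y i = z i
        · rw [if_pos fun i hi => (hy i hi).symm, if_pos hy, hε y z hy, cylSum_congr hy]
          ring
        · rw [if_neg fun h => hy fun i hi => (h i hi).symm, if_neg hy]
    _ = ∑ z, ε z * f z * (ν z * (cylSum ν B z 1 / cylSum ν B z 1)) := by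
        refine sum_congr rfl fun z _ => ?_
        rw [cylSum, sum_div, mul_sum, mul_sum]
        refine sum_congr rfl fun y _ => ?_
        split_ifs
        · rw [Pi.one_apply]
          ring
        · simp
    _ = ∑ y, ε y * ν y * f y := by
        simp only [mul_cylSum_one_div_self hν]
        exact sum_congr rfl fun y _ => by ring

lemma sum_mul_projE (hν : ∀ y, 0 ≤ ν y) (B : Finset (Fin d)) (f : (Fin d → Ω) → ℝ) :
    ∑ y, ν y * projE ν B f y = ∑ y, ν y * f y := by
  simpa using sum_mul_projE_of_junta hν B (ε := fun _ => 1) (fun _ _ _ => rfl) f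

lemma projE_projE_of_subset (hν : ∀ y, 0 ≤ ν y) {A B : Finset (Fin d)} (hAB : A ⊆ B)
    (f : (Fin d → Ω) → ℝ) (x : Fin d → Ω) :
    projE ν A (projE ν B f) x = projE ν A f x := by
  have hnum : ∀ g : (Fin d → Ω) → ℝ, cylSum ν A x g
      = ∑ y, (if ∀ i ∈ A, y i = x i then 1 else 0) * ν y * g y := fun g =>
    sum_congr rfl fun y _ => by split_ifs <;> simp
  have hind : Junta B fun y => if ∀ i ∈ A, y i = x i then (1 : ℝ) else 0 := fun y z hyz =>
    if_congr (forall₂_congr fun i hi => by rw [hyz i (hAB hi)]) rfl rfl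
  rw [projE_eq_cylSum_div, projE_eq_cylSum_div, hnum, hnum f,
    sum_mul_projE_of_junta hν B hind]

end ConditionalExpectation

section Links

variable {d : ℕ} {Ω : Type} [Fintype Ω] [DecidableEq Ω] {μ : (Fin d → Ω) → ℝ}

lemma condMeasure_nonneg (hμ : ∀ y, 0 ≤ μ y) (R : Finset (Fin d)) (x y : Fin d → Ω) :
    0 ≤ condMeasure μ R x y := by
  unfold condMeasure
  refine div_nonneg ?_ (sum_nonneg fun w _ => ?_) <;> split_ifs <;> simp [hμ]

lemma condMeasure_apply (μ : (Fin d → Ω) → ℝ) (R : Finset (Fin d)) (x y : Fin d → Ω) :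
    condMeasure μ R x y = (if ∀ i ∈ R, y i = x i then μ y else 0) / cylSum μ R x 1 := by
  simp [condMeasure, cylSum]

lemma sum_condMeasure {R : Finset (Fin d)} {x : Fin d → Ω} (hx : cylSum μ R x 1 ≠ 0) :
    ∑ y, condMeasure μ R x y = 1 := by
  simp only [condMeasure, ← sum_div]
  simpa [cylSum] using div_self hx

lemma condMeasure_ne_zero {R : Finset (Fin d)} {x y : Fin d → Ω}
    (h : condMeasure μ R x y ≠ 0) : (∀ i ∈ R, y i = x i) ∧ μ y ≠ 0 := by
  unfold condMeasure at h
  split_ifs at h with hy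
  · exact ⟨hy, left_ne_zero_of_mul (by simpa [div_eq_mul_inv] using h)⟩
  · simp at h

lemma projE_eq_expect_condMeasure (μ : (Fin d → Ω) → ℝ) (R : Finset (Fin d))
    (f : (Fin d → Ω) → ℝ) (x : Fin d → Ω) :
    projE μ R f x = expect (condMeasure μ R x) f := by
  rw [projE, _root_.expect, sum_div]
  refine sum_congr rfl fun y _ => ?_
  unfold condMeasure
  split_ifs <;> ring

lemma projE_condMeasure {R : Finset (Fin d)} {x y : Fin d → Ω} (hy : ∀ i ∈ R, y i = x i)
    (hx : cylSum μ R x 1 ≠ 0) (D : Finset (Fin d)) (f : (Fin d → Ω) → ℝ) :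
    projE (condMeasure μ R x) D f y = projE μ (D ∪ R) f y := by
  have hcyl : ∀ h : (Fin d → Ω) → ℝ,
      cylSum (condMeasure μ R x) D y h = cylSum μ (D ∪ R) y h / cylSum μ R x 1 := by
    intro h
    rw [cylSum, cylSum, sum_div]
    refine sum_congr rfl fun w _ => ?_
    by_cases hwD : ∀ i ∈ D, w i = y i
    · by_cases hwR : ∀ i ∈ R, w i = x i
      · have hwDR : ∀ i ∈ D ∪ R, w i = y i := by
          simp only [mem_union]
          rintro i (hi | hi)
          exacts [hwD i hi, (hwR i hi).trans (hy i hi).symm]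
        rw [if_pos hwD, if_pos hwDR, condMeasure_apply, if_pos hwR, div_mul_eq_mul_div]
      · have hwDR : ¬ ∀ i ∈ D ∪ R, w i = y i := fun h =>
          hwR fun i hi => (h i (mem_union_right D hi)).trans (hy i hi)
        rw [if_pos hwD, if_neg hwDR, condMeasure_apply, if_neg hwR, zero_div, zero_mul]
    · have hwDR : ¬ ∀ i ∈ D ∪ R, w i = y i := fun h =>
        hwD fun i hi => h i (mem_union_left R hi)
      rw [if_neg hwD, if_neg hwDR, zero_div]
  rw [projE_eq_cylSum_div, projE_eq_cylSum_div, hcyl, hcyl, div_div_div_cancel_right₀ hx]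

lemma absMoment_eq_sum_mul_absMoment_condMeasure (hμ : ∀ y, 0 ≤ μ y) (q : ℝ)
    (R : Finset (Fin d)) (H : (Fin d → Ω) → ℝ) :
    absMoment μ q H = ∑ x, μ x * absMoment (condMeasure μ R x) q H := by
  have hlink : ∀ x, absMoment (condMeasure μ R x) q H = projE μ R (fun y => |H y| ^ q) x :=
    fun x => (projE_eq_expect_condMeasure μ R _ x).symm
  simp only [hlink]
  exact (sum_mul_projE hμ R _).symm

lemma pnorm_le_of_forall_condMeasure (hμ : ∀ y, 0 ≤ μ y) {q K : ℝ} (hq : 0 < q) (hK : 0 ≤ K)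
    (R : Finset (Fin d)) {F G : (Fin d → Ω) → ℝ}
    (h : ∀ x, μ x ≠ 0 →
      pnorm (condMeasure μ R x) q F ≤ K * pnorm (condMeasure μ R x) q G) :
    pnorm μ q F ≤ K * pnorm μ q G := by
  rw [pnorm_le_mul_pnorm_iff hμ hq hK, absMoment_eq_sum_mul_absMoment_condMeasure hμ q R F,
    absMoment_eq_sum_mul_absMoment_condMeasure hμ q R G, mul_sum]
  refine sum_le_sum fun x _ => ?_
  rcases eq_or_ne (μ x) 0 with h0 | h0
  · simp [h0]
  · rw [mul_left_comm]
    exact mul_le_mul_of_nonneg_left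
      ((pnorm_le_mul_pnorm_iff (condMeasure_nonneg hμ R x) hq hK F G).1 (h x h0)) (hμ x)

-- Jensen's inequality in each link.
lemma pnorm_projE_le (hμ : ∀ y, 0 ≤ μ y) {q : ℝ} (hq : 1 ≤ q) (R : Finset (Fin d))
    (f : (Fin d → Ω) → ℝ) : pnorm μ q (projE μ R f) ≤ pnorm μ q f := by
  have hjensen : absMoment μ q (projE μ R f) ≤ absMoment μ q f := by
    calc absMoment μ q (projE μ R f)
        ≤ ∑ x, μ x * projE μ R (fun y => |f y| ^ q) x := by
          refine sum_le_sum fun x _ => ?_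
          rcases eq_or_ne (μ x) 0 with h0 | h0
          · simp [h0]
          refine mul_le_mul_of_nonneg_left ?_ (hμ x)
          simp only [projE_eq_expect_condMeasure]
          exact abs_expect_rpow_le (condMeasure_nonneg hμ R x)
            (sum_condMeasure (cylSum_one_ne_zero hμ R h0)) hq f
      _ = absMoment μ q f := sum_mul_projE hμ R _
  have := (pnorm_le_mul_pnorm_iff hμ (by positivity) zero_le_one (projE μ R f) f).2
    (by rwa [Real.one_rpow, one_mul])
  rwa [one_mul] at this

end Links

section Product

variable {d : ℕ} {Ω : Type} [Fintype Ω] [DecidableEq Ω] {μ : (Fin d → Ω) → ℝ} {q γ : ℝ}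

lemma pnorm_projE_insert_sub_eq_zero_of_junta (hμ : ∀ y, 0 ≤ μ y) (hq : q ≠ 0)
    {R : Finset (Fin d)} (i : Fin d) {g : (Fin d → Ω) → ℝ} (hg : Junta R g) :
    pnorm μ q (fun x => projE μ (insert i R) g x - projE μ R g x) = 0 :=
  pnorm_eq_zero_of_ne_zero hq fun x hx => by
    rw [projE_of_junta hμ (subset_insert i R) hg hx, projE_of_junta hμ subset_rfl hg hx,
      sub_self]

-- In the link of `R`, `u` is a function of color `j` and the left side is the walk from `j`
-- to `i` minus its stationary part: this is the `(q,γ)`-product hypothesis.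
lemma pnorm_projE_insert_sub_le_of_junta_insert (hμ : ∀ y, 0 ≤ μ y) (hq : 0 < q)
    (hγ : 0 ≤ γ) (hX : IsQGammaProduct μ q γ) {R : Finset (Fin d)} {i j : Fin d}
    (hiR : i ∉ R) (hij : i ≠ j) {u : (Fin d → Ω) → ℝ} (hu : Junta (insert j R) u) :
    pnorm μ q (fun x => projE μ (insert i R) u x - projE μ R u x) ≤ γ * pnorm μ q u := by
  by_cases hjR : j ∈ R
  · rw [insert_eq_of_mem hjR] at hu
    rw [pnorm_projE_insert_sub_eq_zero_of_junta hμ hq.ne' i hu]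
    exact mul_nonneg hγ (pnorm_nonneg hμ u)
  have hcard : R.card + 2 ≤ d := by
    have := card_le_univ (insert i (insert j R))
    rw [card_insert_of_notMem (by simp [hij, hiR]), card_insert_of_notMem hjR,
      Fintype.card_fin] at this
    omega
  refine pnorm_le_of_forall_condMeasure hμ hq hγ R fun x hx => ?_
  have hZ : cylSum μ R x 1 ≠ 0 := cylSum_one_ne_zero hμ R hx
  set σ := condMeasure μ R x
  have hu_link : ∀ y, σ y ≠ 0 → projE σ {j} u y = u y := fun y hy => by
    obtain ⟨hyR, hμy⟩ := condMeasure_ne_zero hy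
    rw [projE_condMeasure hyR hZ, singleton_union]
    exact projE_of_junta hμ subset_rfl hu hμy
  have hwalk : ∀ y, σ y ≠ 0 → projE μ (insert i R) u y - projE μ R u y
      = projE σ {i} (projE σ {j} u) y - expect σ (projE σ {j} u) := fun y hy => by
    obtain ⟨hyR, -⟩ := condMeasure_ne_zero hy
    have h_i : projE σ {i} u y = projE μ (insert i R) u y := by
      rw [projE_condMeasure hyR hZ, singleton_union]
    have h_R : projE σ ∅ u y = projE μ R u y := by
      rw [projE_condMeasure hyR hZ, empty_union]
    have hu_eq := projE_congr_of_ne_zero (fun y hy => (hu_link y hy).symm)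
    rw [← h_i, ← h_R, hu_eq, hu_eq, projE_empty (sum_condMeasure hZ)]
  calc pnorm σ q (fun y => projE μ (insert i R) u y - projE μ R u y)
      = pnorm σ q (fun y => projE σ {i} (projE σ {j} u) y - expect σ (projE σ {j} u)) :=
        pnorm_congr_of_ne_zero hwalk
    _ ≤ γ * pnorm σ q (projE σ {j} u) :=
        hX R x hcard j i hjR hiR hij.symm _ fun a b hab =>
          projE_junta σ {j} u a b (by simpa using hab)
    _ = γ * pnorm σ q u := by rw [pnorm_congr_of_ne_zero hu_link]

-- `E_R` kills `g - E_{R'} g`, and `E_{insert i R}` factors through the contraction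
-- `E_{insert i R'}`.
lemma pnorm_projE_insert_sub_projE_le (hμ : ∀ y, 0 ≤ μ y) (hq : 1 ≤ q)
    {R R' : Finset (Fin d)} (hRR' : R ⊆ R') (i : Fin d) (g : (Fin d → Ω) → ℝ) :
    pnorm μ q (fun x => projE μ (insert i R) (fun y => g y - projE μ R' g y) x
        - projE μ R (fun y => g y - projE μ R' g y) x)
      ≤ pnorm μ q (fun x => projE μ (insert i R') g x - projE μ R' g x) := by
  set v := fun y => g y - projE μ R' g y
  have hR : ∀ x, projE μ R v x = 0 := fun x => by
    rw [projE_sub, projE_projE_of_subset hμ hRR', sub_self]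
  have hiR : ∀ x, projE μ (insert i R) v x = projE μ (insert i R) (projE μ (insert i R') v) x :=
    fun x => (projE_projE_of_subset hμ (insert_subset_insert i hRR') v x).symm
  have hiR' : ∀ x, μ x ≠ 0 → projE μ (insert i R') v x = projE μ (insert i R') g x
      - projE μ R' g x := fun x hx => by
    rw [projE_sub, projE_of_junta hμ (subset_insert i R') (projE_junta μ R' g) hx]
  calc pnorm μ q (fun x => projE μ (insert i R) v x - projE μ R v x)
      = pnorm μ q (projE μ (insert i R) (projE μ (insert i R') v)) := by
        simp only [hR, hiR, sub_zero]
    _ ≤ pnorm μ q (projE μ (insert i R') v) := pnorm_projE_le hμ hq _ _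
    _ = pnorm μ q (fun x => projE μ (insert i R') g x - projE μ R' g x) :=
        pnorm_congr_of_ne_zero hiR'

-- Induction on `S`, splitting `g = (g - E_{s ∪ R} g) + E_{s ∪ R} g`.
lemma pnorm_projE_insert_sub_le (hμ : ∀ y, 0 ≤ μ y) (hq : 1 ≤ q) (hγ : 0 ≤ γ)
    (hX : IsQGammaProduct μ q γ) {R : Finset (Fin d)} {i : Fin d} (hiR : i ∉ R)
    (S : Finset (Fin d)) (hiS : i ∉ S) {g : (Fin d → Ω) → ℝ} (hg : Junta (S ∪ R) g) :
    pnorm μ q (fun x => projE μ (insert i R) g x - projE μ R g x)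
      ≤ γ * S.card * pnorm μ q g := by
  induction S using Finset.induction_on generalizing g with
  | empty =>
    rw [empty_union] at hg
    rw [pnorm_projE_insert_sub_eq_zero_of_junta hμ (by positivity) i hg]
    simp
  | insert j s hjs ih =>
    rw [mem_insert, not_or] at hiS
    set h := projE μ (s ∪ R) g
    have hsplit : (fun x => projE μ (insert i R) g x - projE μ R g x)
        = fun x => (projE μ (insert i R) (fun y => g y - h y) x
            - projE μ R (fun y => g y - h y) x)
          + (projE μ (insert i R) h x - projE μ R h x) := by
      funext x
      simp only [projE_sub]
      ring
    have hnew : pnorm μ q (fun x => projE μ (insert i R) (fun y => g y - h y) x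
        - projE μ R (fun y => g y - h y) x) ≤ γ * pnorm μ q g :=
      (pnorm_projE_insert_sub_projE_le hμ hq subset_union_right i g).trans
        (pnorm_projE_insert_sub_le_of_junta_insert hμ (by positivity) hγ hX
          (by simp [hiS.2, hiR]) hiS.1 (by rwa [← insert_union]))
    have hold : pnorm μ q (fun x => projE μ (insert i R) h x - projE μ R h x)
        ≤ γ * s.card * pnorm μ q g :=
      (ih hiS.2 (projE_junta μ _ g)).trans
        (mul_le_mul_of_nonneg_left (pnorm_projE_le hμ hq _ g) (by positivity))
    rw [hsplit, card_insert_of_notMem hjs]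
    calc _ ≤ _ := pnorm_add_le hμ hq _ _
      _ ≤ γ * pnorm μ q g + γ * s.card * pnorm μ q g := add_le_add hnew hold
      _ = γ * ↑(s.card + 1) * pnorm μ q g := by push_cast; ring

lemma pnorm_projE_union_sub_le (hμ : ∀ y, 0 ≤ μ y) (hq : 1 ≤ q) (hγ : 0 ≤ γ)
    (hX : IsQGammaProduct μ q γ) {R S : Finset (Fin d)} {g : (Fin d → Ω) → ℝ}
    (hg : Junta S g) (U : Finset (Fin d)) (hUS : Disjoint U S) (hUR : Disjoint U R) :
    pnorm μ q (fun x => projE μ (U ∪ R) g x - projE μ R g x)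
      ≤ γ * U.card * S.card * pnorm μ q g := by
  induction U using Finset.induction_on with
  | empty =>
    rw [pnorm_eq_zero_of_ne_zero (by positivity) fun x _ => by rw [empty_union, sub_self]]
    simp
  | insert i U hiU ih =>
    rw [disjoint_insert_left] at hUS hUR
    have hsplit : (fun x => projE μ (insert i U ∪ R) g x - projE μ R g x)
        = fun x => (projE μ (insert i (U ∪ R)) g x - projE μ (U ∪ R) g x)
          + (projE μ (U ∪ R) g x - projE μ R g x) := by
      funext x
      rw [insert_union]
      ring
    have hstep := pnorm_projE_insert_sub_le hμ hq hγ hX (R := U ∪ R)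
      (by simp [hiU, hUR.1]) S hUS.1 (hg.mono subset_union_left)
    rw [hsplit, card_insert_of_notMem hiU]
    calc _ ≤ _ := pnorm_add_le hμ hq _ _
      _ ≤ γ * S.card * pnorm μ q g + γ * U.card * S.card * pnorm μ q g :=
        add_le_add hstep (ih hUS.2 hUR.2)
      _ = γ * ↑(U.card + 1) * S.card * pnorm μ q g := by push_cast; ring

end Product

theorem proj_composition_approx_general {d : ℕ} {Ω : Type} [Fintype Ω] [DecidableEq Ω]
    (μ : (Fin d → Ω) → ℝ) (hμ0 : ∀ x, 0 ≤ μ x)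
    (q γ : ℝ) (hq : 1 < q) (hγ : 0 ≤ γ) (hX : IsQGammaProduct μ q γ)
    (f : (Fin d → Ω) → ℝ) (T T' : Finset (Fin d)) :
    pnorm μ q (fun x => projE μ T (projE μ T' f) x - projE μ (T ∩ T') f x)
      ≤ γ * T.card * T'.card * pnorm μ q f := by
  have htower : ∀ x, projE μ (T ∩ T') f x = projE μ (T ∩ T') (projE μ T' f) x :=
    fun x => (projE_projE_of_subset hμ0 inter_subset_right f x).symm
  calc pnorm μ q (fun x => projE μ T (projE μ T' f) x - projE μ (T ∩ T') f x)
      = pnorm μ q (fun x => projE μ ((T \ T') ∪ (T ∩ T')) (projE μ T' f) x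
          - projE μ (T ∩ T') (projE μ T' f) x) := by
        rw [sdiff_union_inter]
        simp only [htower]
    _ ≤ γ * (T \ T').card * T'.card * pnorm μ q (projE μ T' f) :=
        pnorm_projE_union_sub_le hμ0 hq.le hγ hX (projE_junta μ T' f) _ sdiff_disjoint
          (disjoint_sdiff_inter T T')
    _ ≤ γ * T.card * T'.card * pnorm μ q f := by
        gcongr
        · exact pnorm_nonneg hμ0 _
        · exact sdiff_subset
        · exact pnorm_projE_le hμ0 hq.le T' f

/-- composition of projections approximates the intersection
projection on a `(q,γ)`-product:
`‖E_T E_{T'} f − E_{T∩T'} f‖_q ≤ γ |T||T'| ‖f‖_q`. -/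
theorem proj_composition_approx {d : ℕ} {Ω : Type} [Fintype Ω] [DecidableEq Ω]
    (μ : (Fin d → Ω) → ℝ) (hμ0 : ∀ x, 0 ≤ μ x) (hμ1 : ∑ x, μ x = 1)
    (q γ : ℝ) (hq : 1 < q) (hγ : 0 ≤ γ) (hX : IsQGammaProduct μ q γ)
    (f : (Fin d → Ω) → ℝ) (T T' : Finset (Fin d)) :
    pnorm μ q (fun x => projE μ T (projE μ T' f) x - projE μ (T ∩ T') f x)
      ≤ γ * T.card * T'.card * pnorm μ q f :=
  proj_composition_approx_general μ hμ0 q γ hq hγ hX f T T'
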